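/- The probability measure with density 1/(log 2 · (1+x)) on [0,1] is invariant under the Gauss map G. -/

import Mathlib

/-! Since `G x = fract (1/x)`, for `0 ≤ a < 1` the set `G⁻¹[0, a] ∩ (0, 1]` is the disjoint union
of the intervals `[1/(n+1+a), 1/(n+1)]`, `n ∈ ℕ`. With `F x = log (1 + x) / log 2` the
distribution function of the Gauss measure, the `n`-th interval has measure
`F (a/(n+1)) - F (a/(n+2))`; these telescope to `F a`, the measure of `[0, a]`. Two finite
measures on `ℝ` with the same distribution function are equal. -/

open MeasureTheory

noncomputable section

/-- The Gauss map. -/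
def G (x : ℝ) : ℝ := if x = 0 then 0 else 1 / x - ⌊1 / x⌋

/-- The Gauss measure, with density `1/(log 2 · (1+x))` on `[0,1]`. -/
def gaussMeasure : Measure ℝ :=
  (volume.restrict (Set.Icc (0 : ℝ) 1)).withDensity fun x =>
    ENNReal.ofReal (1 / (Real.log 2 * (1 + x)))

open Set Filter Topology Function

lemma G_eq_fract (x : ℝ) : G x = Int.fract (1 / x) := by
  by_cases hx : x = 0
  · simp [G, hx]
  · rw [G, if_neg hx, Int.fract]

lemma G_mem_Ico (x : ℝ) : G x ∈ Ico 0 1 :=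
  G_eq_fract x ▸ ⟨Int.fract_nonneg _, Int.fract_lt_one _⟩

lemma measurable_G : Measurable G := by
  rw [funext G_eq_fract]
  exact measurable_fract.comp (measurable_const.div measurable_id)

lemma Int.fract_le_iff_exists_mem_Icc {y a : ℝ} (ha : a < 1) :
    Int.fract y ≤ a ↔ ∃ k : ℤ, y ∈ Icc (k : ℝ) (k + a) := by
  constructor
  · intro h
    exact ⟨⌊y⌋, Int.floor_le y, by rw [Int.fract] at h; linarith⟩
  · rintro ⟨k, hk, hka⟩
    have hfloor : ⌊y⌋ = k := Int.floor_eq_iff.2 ⟨hk, by linarith⟩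
    rw [Int.fract, hfloor]
    linarith

lemma Antitone.hasSum_sub_succ {f : ℕ → ℝ} {l : ℝ} (hf : Antitone f)
    (hl : Tendsto f atTop (𝓝 l)) : HasSum (fun n => f n - f (n + 1)) (f 0 - l) := by
  rw [hasSum_iff_tendsto_nat_of_nonneg fun n => sub_nonneg.2 (hf n.le_succ)]
  simp_rw [Finset.sum_range_sub']
  exact tendsto_const_nhds.sub hl

def gaussCDF (x : ℝ) : ℝ := Real.log (1 + x) / Real.log 2

lemma gaussCDF_zero : gaussCDF 0 = 0 := by simp [gaussCDF]

lemma gaussCDF_one : gaussCDF 1 = 1 := by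
  rw [gaussCDF, one_add_one_eq_two, div_self (Real.log_pos one_lt_two).ne']

lemma gaussCDF_mono {x y : ℝ} (hx : -1 < x) (hxy : x ≤ y) : gaussCDF x ≤ gaussCDF y :=
  div_le_div_of_nonneg_right (Real.log_le_log (by linarith) (by linarith))
    (Real.log_pos one_lt_two).le

lemma hasDerivAt_gaussCDF {x : ℝ} (hx : -1 < x) :
    HasDerivAt gaussCDF (1 / (Real.log 2 * (1 + x))) x := by
  have h := ((hasDerivAt_id x).const_add 1).log (by simp only [id]; linarith)
    |>.div_const (Real.log 2)
  rw [id, div_div, mul_comm] at h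
  exact h

lemma continuousOn_deriv_gaussCDF :
    ContinuousOn (fun x : ℝ => 1 / (Real.log 2 * (1 + x))) (Ioi (-1)) :=
  continuousOn_const.div (by fun_prop) fun x hx =>
    mul_ne_zero (Real.log_pos one_lt_two).ne' (by linarith [mem_Ioi.1 hx])

lemma gaussMeasure_compl_Icc : gaussMeasure (Icc 0 1)ᶜ = 0 :=
  withDensity_absolutelyContinuous _ _ <| by
    rw [Measure.restrict_apply measurableSet_Icc.compl, compl_inter_self, measure_empty]

lemma gaussMeasure_Icc {c d : ℝ} (hc : 0 ≤ c) (hcd : c ≤ d) (hd : d ≤ 1) :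
    gaussMeasure (Icc c d) = ENNReal.ofReal (gaussCDF d - gaussCDF c) := by
  rw [gaussMeasure, withDensity_apply _ measurableSet_Icc, Measure.restrict_restrict
    measurableSet_Icc, inter_eq_left.2 (Icc_subset_Icc hc hd)]
  have hcd1 : Icc c d ⊆ Ioi (-1) := fun x hx => by simp only [mem_Ioi]; linarith [hx.1]
  have hcont := continuousOn_deriv_gaussCDF.mono hcd1
  rw [← ofReal_integral_eq_lintegral_ofReal (hcont.integrableOn_Icc), integral_Icc_eq_integral_Ioc,
    ← intervalIntegral.integral_of_le hcd, intervalIntegral.integral_eq_sub_of_hasDerivAt]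
  · intro x hx
    exact hasDerivAt_gaussCDF (hcd1 (uIcc_of_le hcd ▸ hx))
  · exact hcont.intervalIntegrable_of_Icc hcd
  · filter_upwards [ae_restrict_mem measurableSet_Icc] with x hx
    have : 0 < 1 + x := by linarith [hx.1]
    have := Real.log_pos one_lt_two
    positivity

instance : NullSingletonClass gaussMeasure := by
  unfold gaussMeasure
  infer_instance

lemma gaussMeasure_inter_Icc (s : Set ℝ) : gaussMeasure (s ∩ Icc 0 1) = gaussMeasure s :=
  measure_inter_conull gaussMeasure_compl_Icc

lemma gaussMeasure_inter_Ioc (s : Set ℝ) : gaussMeasure (s ∩ Ioc 0 1) = gaussMeasure s := by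
  rw [measure_congr (ae_eq_refl s |>.inter Ioc_ae_eq_Icc), gaussMeasure_inter_Icc]

lemma gaussMeasure_univ : gaussMeasure univ = 1 := by
  rw [← gaussMeasure_inter_Icc, univ_inter, gaussMeasure_Icc le_rfl zero_le_one le_rfl,
    gaussCDF_one, gaussCDF_zero, sub_zero, ENNReal.ofReal_one]

instance : IsProbabilityMeasure gaussMeasure := ⟨gaussMeasure_univ⟩

lemma gaussMeasure_Iic {a : ℝ} (ha₀ : 0 ≤ a) (ha₁ : a ≤ 1) :
    gaussMeasure (Iic a) = ENNReal.ofReal (gaussCDF a) := by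
  have hIcc : Iic a ∩ Icc 0 1 = Icc 0 a := by
    ext x
    simp only [mem_inter_iff, mem_Iic, mem_Icc]
    grind
  rw [← gaussMeasure_inter_Icc, hIcc, gaussMeasure_Icc le_rfl ha₀ ha₁,
    gaussCDF_zero, sub_zero]

/-- For `0 ≤ a < 1`, the points of the branch `(1/(n+2), 1/(n+1)]` of `G` that `G` maps into
`[0, a]`. -/
def gaussBranchIic (a : ℝ) (n : ℕ) : Set ℝ := Icc (1 / (n + 1 + a)) (1 / (n + 1))

lemma mem_gaussBranchIic_iff {a x : ℝ} {n : ℕ} (ha : 0 ≤ a) :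
    x ∈ gaussBranchIic a n ↔ 0 < x ∧ 1 / x ∈ Icc ((n : ℝ) + 1) (n + 1 + a) := by
  have hn : (0 : ℝ) < n + 1 := n.cast_add_one_pos
  have hna : (0 : ℝ) < n + 1 + a := by positivity
  constructor
  · rintro ⟨hlo, hhi⟩
    have hx : 0 < x := (one_div_pos.2 hna).trans_le hlo
    exact ⟨hx, (le_one_div hx hn).1 hhi, (one_div_le hx hna).2 hlo⟩
  · rintro ⟨hx, hlo, hhi⟩
    exact ⟨(one_div_le hx hna).1 hhi, (le_one_div hx hn).2 hlo⟩

lemma floor_one_div_of_mem_gaussBranchIic {a x : ℝ} {n : ℕ} (ha₀ : 0 ≤ a) (ha₁ : a < 1)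
    (hx : x ∈ gaussBranchIic a n) : ⌊1 / x⌋ = n + 1 := by
  obtain ⟨-, hlo, hhi⟩ := (mem_gaussBranchIic_iff ha₀).1 hx
  exact Int.floor_eq_iff.2 ⟨by push_cast; exact hlo, by push_cast; linarith⟩

lemma pairwise_disjoint_gaussBranchIic {a : ℝ} (ha₀ : 0 ≤ a) (ha₁ : a < 1) :
    Pairwise (Disjoint on gaussBranchIic a) := fun m n hmn =>
  Set.disjoint_left.2 fun x hm hn => hmn <| by
    have := (floor_one_div_of_mem_gaussBranchIic ha₀ ha₁ hm).symm.trans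
      (floor_one_div_of_mem_gaussBranchIic ha₀ ha₁ hn)
    omega

lemma G_preimage_Iic_inter_Ioc {a : ℝ} (ha₀ : 0 ≤ a) (ha₁ : a < 1) :
    G ⁻¹' Iic a ∩ Ioc 0 1 = ⋃ n, gaussBranchIic a n := by
  ext x
  simp only [mem_inter_iff, mem_preimage, mem_Iic, mem_Ioc, mem_iUnion, G_eq_fract,
    Int.fract_le_iff_exists_mem_Icc ha₁, mem_gaussBranchIic_iff ha₀]
  constructor
  · rintro ⟨⟨k, hk, hka⟩, hx₀, hx₁⟩
    have h1 : 1 ≤ 1 / x := (le_one_div one_pos hx₀).2 (by rwa [div_one])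
    have hk₀ : 0 < k := by exact_mod_cast (show (0 : ℝ) < k by linarith)
    have hk : (((k - 1).toNat : ℕ) : ℝ) + 1 = k := by
      rw [← Int.cast_natCast, Int.toNat_of_nonneg (by omega)]
      push_cast
      ring
    exact ⟨(k - 1).toNat, hx₀, by rwa [hk], by rwa [hk]⟩
  · rintro ⟨n, hx₀, hlo, hhi⟩
    refine ⟨⟨n + 1, by push_cast; exact hlo, by push_cast; exact hhi⟩, hx₀, ?_⟩
    have h1 : 1 ≤ 1 / x := by linarith [n.cast_nonneg (α := ℝ)]
    simpa using (le_one_div one_pos hx₀).1 h1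

/-- Makes the measures of the sets `gaussBranchIic a n` telescope in `n`. -/
lemma gaussCDF_one_div_sub {y a : ℝ} (hy : 0 < y) (ha : 0 ≤ a) :
    gaussCDF (1 / y) - gaussCDF (1 / (y + a)) = gaussCDF (a / y) - gaussCDF (a / (y + 1)) := by
  have hya : 0 < y + a := by linarith
  have hy1 : 0 < y + 1 := by linarith
  simp only [gaussCDF, ← sub_div]
  congr 1
  rw [one_add_div hy.ne', one_add_div hya.ne', one_add_div hy.ne', one_add_div hy1.ne',
    Real.log_div (by positivity) hy.ne', Real.log_div (by positivity) hya.ne',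
    Real.log_div (by positivity) hy.ne', Real.log_div (by positivity) hy1.ne']
  ring_nf

lemma gaussMeasure_gaussBranchIic {a : ℝ} (ha : 0 ≤ a) (n : ℕ) :
    gaussMeasure (gaussBranchIic a n) =
      ENNReal.ofReal (gaussCDF (a / (n + 1)) - gaussCDF (a / (n + 1 + 1))) := by
  have hn : (0 : ℝ) < n + 1 := n.cast_add_one_pos
  rw [gaussBranchIic, gaussMeasure_Icc (by positivity)
    (one_div_le_one_div_of_le hn (by linarith)) (by rw [div_le_one hn]; linarith),
    gaussCDF_one_div_sub hn ha]

lemma antitone_gaussCDF_div {a : ℝ} (ha : 0 ≤ a) :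
    Antitone fun n : ℕ => gaussCDF (a / (n + 1)) := fun m n hmn =>
  gaussCDF_mono (neg_one_lt_zero.trans_le (by positivity))
    (div_le_div_of_nonneg_left ha m.cast_add_one_pos (by gcongr))

lemma hasSum_gaussCDF_div_sub {a : ℝ} (ha : 0 ≤ a) :
    HasSum (fun n : ℕ => gaussCDF (a / (n + 1)) - gaussCDF (a / (n + 1 + 1))) (gaussCDF a) := by
  have hlim : Tendsto (fun n : ℕ => gaussCDF (a / (n + 1))) atTop (𝓝 (gaussCDF 0)) :=
    (hasDerivAt_gaussCDF (by norm_num)).continuousAt.tendsto.comp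
      (tendsto_const_div_atTop_nhds_zero_nat a |>.comp (tendsto_add_atTop_nat 1)) |>.congr
      fun n => by simp
  simpa [gaussCDF_zero] using (antitone_gaussCDF_div ha).hasSum_sub_succ hlim

lemma gaussMeasure_G_preimage_Iic_of_lt_one {a : ℝ} (ha₀ : 0 ≤ a) (ha₁ : a < 1) :
    gaussMeasure (G ⁻¹' Iic a) = ENNReal.ofReal (gaussCDF a) := by
  have hsum := hasSum_gaussCDF_div_sub ha₀
  rw [← gaussMeasure_inter_Ioc, G_preimage_Iic_inter_Ioc ha₀ ha₁,
    measure_iUnion (pairwise_disjoint_gaussBranchIic ha₀ ha₁) fun _ => measurableSet_Icc]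
  simp_rw [gaussMeasure_gaussBranchIic ha₀]
  rw [← ENNReal.ofReal_tsum_of_nonneg (fun n => ?_) hsum.summable, hsum.tsum_eq]
  simpa using sub_nonneg.2 (antitone_gaussCDF_div ha₀ n.le_succ)

lemma gaussMeasure_G_preimage_Iic (a : ℝ) :
    gaussMeasure (G ⁻¹' Iic a) = gaussMeasure (Iic a) := by
  rcases lt_or_ge a 0 with ha₀ | ha₀
  · have hG : G ⁻¹' Iic a = ∅ :=
      eq_empty_of_forall_notMem fun x (hx : G x ≤ a) => by linarith [(G_mem_Ico x).1]
    rw [hG, measure_empty, eq_comm]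
    refine measure_mono_null ?_ gaussMeasure_compl_Icc
    exact fun x (hx : x ≤ a) (h : x ∈ Icc 0 1) => by linarith [h.1]
  rcases lt_or_ge a 1 with ha₁ | ha₁
  · rw [gaussMeasure_G_preimage_Iic_of_lt_one ha₀ ha₁, gaussMeasure_Iic ha₀ ha₁.le]
  · have hG : G ⁻¹' Iic a = univ :=
      eq_univ_of_forall fun x => ((G_mem_Ico x).2.trans_le ha₁).le
    rw [hG, ← gaussMeasure_inter_Icc, ← gaussMeasure_inter_Icc (Iic a), univ_inter,
      inter_eq_right.2 fun x hx => hx.2.trans ha₁]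

lemma measurePreserving_G : MeasurePreserving G gaussMeasure gaussMeasure :=
  ⟨measurable_G, Measure.ext_of_Iic _ _ fun a => by
    rw [Measure.map_apply measurable_G measurableSet_Iic, gaussMeasure_G_preimage_Iic]⟩

/-- The probability measure with density `1/(log 2 (1+x))` on `[0,1]` is invariant under the
Gauss map. -/
theorem stmt9 :
    gaussMeasure Set.univ = 1 ∧
      ∀ E : Set ℝ, MeasurableSet E → E ⊆ Set.Icc 0 1 →
        gaussMeasure (G ⁻¹' E) = gaussMeasure E :=
  ⟨gaussMeasure_univ, fun _ hE _ => measurePreserving_G.measure_preimage hE.nullMeasurableSet⟩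

end
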